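/- arXiv:2401.05280 — 2 statements merged into one kernel-verified Lean document; each statement's English description precedes it below -/
import Mathlib

section
/- Let l, u, y be real numbers with l ≤ y ≤ u. Then x = max(0, y) holds if and only if there exists z ∈ {0, 1} such that x ≥ 0, x ≥ y, x ≤ y − l·(1 − z), and x ≤ u·z. In other words, the projection onto the (y, x)-coordinates of the big-M mixed-integer feasible set {(y, x, z) : l ≤ y ≤ u, x ≥ 0, x ≥ y, x ≤ y − l(1−z), x ≤ u·z, z ∈ {0,1}} equals the graph of the ReLU function on [l, u]. -/
/-- Big-M MILP encoding of a single ReLU unit: for `l ≤ y ≤ u`, the projection onto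
the `(y, x)`-coordinates of the big-M mixed-integer feasible set equals the graph of
the ReLU function `x = max 0 y`. -/
theorem relu_bigM_encoding (l u y x : ℝ) (hly : l ≤ y) (hyu : y ≤ u) :
    x = max 0 y ↔
      ∃ z : ℝ, (z = 0 ∨ z = 1) ∧
        0 ≤ x ∧ y ≤ x ∧ x ≤ y - l * (1 - z) ∧ x ≤ u * z := by
  constructor
  · intro hx
    rcases le_or_gt y 0 with hy | hy
    · refine ⟨0, Or.inl rfl, ?_⟩
      have h0 : x = 0 := by rw [hx, max_eq_left hy]
      refine ⟨by simp [h0], by linarith, by linarith, by simp [h0]⟩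
    · refine ⟨1, Or.inr rfl, ?_⟩
      have h0 : x = y := by rw [hx, max_eq_right hy.le]
      exact ⟨by linarith, by linarith, by simp [h0], by linarith⟩
  · rintro ⟨z, (rfl | rfl), h0, h1, h2, h3⟩
    · simp only [mul_zero] at h3
      have : x = 0 := le_antisymm h3 h0
      rw [this, eq_comm, max_eq_left (by linarith)]
    · simp only [sub_self, mul_zero, sub_zero] at h2
      have : x = y := le_antisymm h2 h1
      rw [this, eq_comm, max_eq_right (by linarith)]
end

section
/- Consider an L-layer feedforward ReLU network and suppose l_y^{(i)}, u_y^{(i)} ∈ ℝ^{n_i} are valid pre-activation bounds, i.e., every trajectory with input x^{(0)} ∈ C satisfies l_y^{(i)} ≤ y^{(i)} ≤ u_y^{(i)} componentwise for i = 1, …, L−1. Then the projection onto the variables (x^{(0)}, y^{(1)}, x^{(1)}, …, y^{(L)}) of the MILP feasible set — consisting of all (x^{(0)}, {y^{(i)}}, {x^{(i)}}, {z^{(i)}}) with x^{(0)} ∈ C, y^{(i)} = W^{(i)} x^{(i−1)} + b^{(i)} for i = 1, …, L, l_y^{(i)} ≤ y^{(i)} ≤ u_y^{(i)} for i = 1,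 …, L−1, and, for each i = 1, …, L−1 and each neuron k, z^{(i)}_k ∈ {0,1}, x^{(i)}_k ≥ 0, x^{(i)}_k ≥ y^{(i)}_k, x^{(i)}_k ≤ y^{(i)}_k − (l_y^{(i)})_k (1 − z^{(i)}_k), x^{(i)}_k ≤ (u_y^{(i)})_k · z^{(i)}_k — equals exactly the set of network trajectories {(x^{(0)}, y^{(1)}, ReLU(y^{(1)}), …, y^{(L)}) : x^{(0)} ∈ C, y^{(i)} = W^{(i)} x^{(i−1)} + b^{(i)}, x^{(i)} = ReLU(y^{(i)})}. Consequently, for any objective f, the optimal value of the MILP equals the infimum of f(y^{(L)}) over all inputs x^{(0)} ∈ C. -/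
/-- A trajectory of an `L`-layer feedforward ReLU network: the input lies in `C`,
pre-activations are given by the affine layers, and post-activations by
componentwise ReLU for layers `1, …, L-1`. -/
def IsTrajectory (L : ℕ) (n : ℕ → ℕ)
    (W : (i : ℕ) → Matrix (Fin (n (i + 1))) (Fin (n i)) ℝ)
    (b : (i : ℕ) → Fin (n (i + 1)) → ℝ) (C : Set (Fin (n 0) → ℝ))
    (x y : (i : ℕ) → Fin (n i) → ℝ) : Prop :=
  x 0 ∈ C ∧
  (∀ i < L, y (i + 1) = (W i).mulVec (x i) + b i) ∧
  (∀ i, 1 ≤ i → i < L → ∀ k : Fin (n i), x i k = max 0 (y i k))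

/-- The projection onto the continuous variables `(x, y)` of the feasible set of
the big-M MILP encoding of the verification problem, with valid pre-activation
bounds `ly ≤ y^{(i)} ≤ uy` for `i = 1, …, L-1`. -/
def milpProjection (L : ℕ) (n : ℕ → ℕ)
    (W : (i : ℕ) → Matrix (Fin (n (i + 1))) (Fin (n i)) ℝ)
    (b : (i : ℕ) → Fin (n (i + 1)) → ℝ) (C : Set (Fin (n 0) → ℝ))
    (ly uy : (i : ℕ) → Fin (n i) → ℝ) :
    Set (((i : ℕ) → Fin (n i) → ℝ) × ((i : ℕ) → Fin (n i) → ℝ)) :=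
  {p | ∃ z : (i : ℕ) → Fin (n i) → ℝ,
    p.1 0 ∈ C ∧
    (∀ i < L, p.2 (i + 1) = (W i).mulVec (p.1 i) + b i) ∧
    (∀ i, 1 ≤ i → i < L → ∀ k : Fin (n i),
      ly i k ≤ p.2 i k ∧ p.2 i k ≤ uy i k) ∧
    (∀ i, 1 ≤ i → i < L → ∀ k : Fin (n i),
      (z i k = 0 ∨ z i k = 1) ∧
      0 ≤ p.1 i k ∧ p.2 i k ≤ p.1 i k ∧
      p.1 i k ≤ p.2 i k - ly i k * (1 - z i k) ∧
      p.1 i k ≤ uy i k * z i k)}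

/-- Exactness of the big-M MILP encoding with valid pre-activation bounds: the
projection of the MILP feasible set onto the continuous variables equals the set
of network trajectories, and consequently, for any objective `f`, the optimal
value of the MILP equals the infimum of `f (y^{(L)})` over all inputs in `C`. -/
theorem milp_encoding_exact (L : ℕ) (n : ℕ → ℕ)
    (W : (i : ℕ) → Matrix (Fin (n (i + 1))) (Fin (n i)) ℝ)
    (b : (i : ℕ) → Fin (n (i + 1)) → ℝ) (C : Set (Fin (n 0) → ℝ))
    (ly uy : (i : ℕ) → Fin (n i) → ℝ)
    (hvalid : ∀ x y : (i : ℕ) → Fin (n i) → ℝ, IsTrajectory L n W b C x y →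
      ∀ i, 1 ≤ i → i < L → ∀ k : Fin (n i), ly i k ≤ y i k ∧ y i k ≤ uy i k)
    (f : (Fin (n L) → ℝ) → ℝ) :
    milpProjection L n W b C ly uy = {p | IsTrajectory L n W b C p.1 p.2} ∧
      sInf ((fun p => f (p.2 L)) '' milpProjection L n W b C ly uy) =
        sInf {v : ℝ | ∃ x y : (i : ℕ) → Fin (n i) → ℝ,
          IsTrajectory L n W b C x y ∧ v = f (y L)} := by
  have hset : milpProjection L n W b C ly uy = {p | IsTrajectory L n W b C p.1 p.2} := by
    ext p
    constructor
    · rintro ⟨z, hC, haff, hbnd, hrelu⟩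
      refine ⟨hC, haff, ?_⟩
      intro i hi1 hiL k
      obtain ⟨hz, hx0, hyx, hxu1, hxu2⟩ := hrelu i hi1 hiL k
      rcases hz with h0 | h1
      · have hx : p.1 i k = 0 := le_antisymm (by simpa [h0] using hxu2) hx0
        have : p.2 i k ≤ 0 := hx ▸ hyx
        simp [hx, max_eq_left this]
      · have hx : p.1 i k = p.2 i k := le_antisymm (by simpa [h1] using hxu1) hyx
        have : 0 ≤ p.2 i k := hx ▸ hx0
        simp [hx, max_eq_right this]
    · rintro ⟨hC, haff, hrelu⟩
      have htraj : IsTrajectory L n W b C p.1 p.2 := ⟨hC, haff, hrelu⟩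
      refine ⟨fun i k => if p.2 i k ≤ 0 then 0 else 1, hC, haff,
        fun i hi1 hiL k => hvalid p.1 p.2 htraj i hi1 hiL k, ?_⟩
      intro i hi1 hiL k
      obtain ⟨hl, hu⟩ := hvalid p.1 p.2 htraj i hi1 hiL k
      have hx := hrelu i hi1 hiL k
      by_cases h : p.2 i k ≤ 0
      · have hx0 : p.1 i k = 0 := by simp [hx, max_eq_left h]
        refine ⟨Or.inl (by simp [h]), ?_, ?_, ?_, ?_⟩ <;> simp [h, hx0] <;> linarith
      · push_neg at h
        have hx0 : p.1 i k = p.2 i k := by simp [hx, max_eq_right h.le]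
        refine ⟨Or.inr (by simp [not_le.mpr h]), ?_, ?_, ?_, ?_⟩ <;>
          simp [not_le.mpr h, hx0] <;> linarith
  refine ⟨hset, ?_⟩
  congr 1
  rw [hset]
  ext v
  constructor
  · rintro ⟨p, hp, rfl⟩
    exact ⟨p.1, p.2, hp, rfl⟩
  · rintro ⟨x, y, hxy, rfl⟩
    exact ⟨(x, y), hxy, rfl⟩
end
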